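/- For all integers n ≥ 2, k ≥ 1, and m ≥ 0 with m(n−1) ≤ k, there exist a finite set S, a normalized monotone submodular function f : 2^S → ℝ, action sets S_1, …, S_n ⊆ S, and an augmented greedy profile (x_i, z_i)_{i=1}^n for (f, (S_i), k, m) such that f(x_1 ∪ … ∪ x_n) = k(n−1) + m(n−1) and OPT(f,(S_i),k) = 2k(n−1) + m(n−1). -/

import Mathlib

open Finset

variable {α : Type*}

/-- `f` is monotone on finsets. -/
def IsMonotoneFn (f : Finset α → ℝ) : Prop := ∀ A B : Finset α, A ⊆ B → f A ≤ f B

/-- `f` is submodular. -/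
def IsSubmodularFn [DecidableEq α] (f : Finset α → ℝ) : Prop :=
  ∀ A B : Finset α, A ⊆ B → ∀ s ∉ B, f (insert s A) - f A ≥ f (insert s B) - f B

/-- Marginal contribution Δ(A|B) = f(A ∪ B) − f(B). -/
def marg [DecidableEq α] (f : Finset α → ℝ) (A B : Finset α) : ℝ := f (A ∪ B) - f B

/-- Δ^l(A|B): best marginal of a subset of `A` of size at most `l`. -/
noncomputable def margSup [DecidableEq α] (f : Finset α → ℝ) (l : ℕ) (A B : Finset α) : ℝ :=
  (A.powerset.filter (fun C => C.card ≤ l)).sup' ⟨∅, by simp⟩ (fun C => marg f C B)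

/-- Union of the first `i` sets: x_0 ∪ ⋯ ∪ x_{i-1}. -/
def pref [DecidableEq α] (x : ℕ → Finset α) (i : ℕ) : Finset α := (Finset.range i).biUnion x

/-- A nominal greedy profile. -/
def NomGreedy [DecidableEq α] (f : Finset α → ℝ) (Ss : ℕ → Finset α) (k n : ℕ)
    (x : ℕ → Finset α) : Prop :=
  ∀ i < n, x i ⊆ Ss i ∧ (x i).card ≤ k ∧
    ∀ c : Finset α, c ⊆ Ss i → c.card ≤ k → f (c ∪ pref x i) ≤ f (x i ∪ pref x i)

/-- An augmented greedy profile. -/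
def AugGreedy [DecidableEq α] (f : Finset α → ℝ) (Ss : ℕ → Finset α) (k m n : ℕ)
    (x z : ℕ → Finset α) : Prop :=
  ∀ i < n,
    (x i ⊆ Ss i ∪ pref z i ∧ (x i).card ≤ k ∧
      ∀ c : Finset α, c ⊆ Ss i ∪ pref z i → c.card ≤ k →
        f (c ∪ pref x i) ≤ f (x i ∪ pref x i)) ∧
    ∃ zk zr : Finset α,
      z i = zk ∪ zr ∧ zk ⊆ Ss i ∧ zk.card ≤ min k m ∧
      (∀ w : Finset α, w ⊆ Ss i → w.card ≤ min k m →
        marg f w (pref x (i + 1)) ≤ marg f zk (pref x (i + 1))) ∧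
      zr ⊆ Ss i ∧ zr.card ≤ m - k

/-- The optimal value OPT(f, (S_i), k) over feasible profiles with n agents. -/
noncomputable def OPTval [DecidableEq α] [Fintype α] (f : Finset α → ℝ) (Ss : ℕ → Finset α)
    (n k : ℕ) : ℝ :=
  ((Finset.univ : Finset (Fin n → Finset α)).filter
      (fun y => ∀ i : Fin n, y i ⊆ Ss (i : ℕ) ∧ (y i).card ≤ k)).sup'
    ⟨(fun _ => ∅), by simp⟩ (fun y => f (Finset.univ.biUnion (fun i => y i)))

/-!
The instance is a coverage function on an `(n - 1) × (2k + m)` grid of cells whose columns come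
in three blocks: `k` low, `m` extra and `k` high columns. Agent `0` may pick any columns, each
covering `n - 1` cells; agent `i ≥ 1` may pick the `k` elements of row `i - 1`, the `j`-th of which
covers the `j`-th low cell and, if `j < m`, the `j`-th extra cell of that row. Greedily, agent `0`
takes the low columns and augments with the extra columns (a tie with the high ones); agent `1`
then takes the extra columns, and nothing available to agents `i ≥ 1` covers a high cell, so the
greedy value is `(n - 1)(k + m)`. Taking the high columns instead, while every other agent takes
its row, covers the whole grid: `(n - 1)(2k + m)`.
-/

section Coverage

variable {β : Type*} [DecidableEq β] (cov : α → Finset β)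

def coverage (A : Finset α) : ℝ := (#(A.biUnion cov) : ℝ)

theorem coverage_empty : coverage cov ∅ = 0 := by simp [coverage]

theorem coverage_monotone : IsMonotoneFn (coverage cov) := fun _ _ h => by
  unfold coverage
  exact_mod_cast card_le_card (biUnion_subset_biUnion_of_subset_left _ h)

theorem coverage_insert_sub_coverage [DecidableEq α] (s : α) (A : Finset α) :
    coverage cov (insert s A) - coverage cov A = (#(cov s \ A.biUnion cov) : ℝ) := by
  rw [coverage, coverage, biUnion_insert, ← card_sdiff_add_card]
  push_cast
  ring

theorem coverage_submodular [DecidableEq α] : IsSubmodularFn (coverage cov) := by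
  intro A B h s _
  rw [coverage_insert_sub_coverage, coverage_insert_sub_coverage, ge_iff_le]
  exact_mod_cast card_le_card <|
    sdiff_subset_sdiff le_rfl (biUnion_subset_biUnion_of_subset_left _ h)

theorem coverage_le_card_mul {A : Finset α} {b : ℕ} (h : ∀ a ∈ A, #(cov a) ≤ b) :
    coverage cov A ≤ #A * b := by
  unfold coverage
  exact_mod_cast card_biUnion_le.trans (sum_le_card_nsmul _ _ _ h)

theorem marg_coverage_le [DecidableEq α] (A B : Finset α) :
    marg (coverage cov) A B ≤ coverage cov A := by
  unfold marg coverage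
  rw [union_biUnion, sub_le_iff_le_add]
  exact_mod_cast card_union_le _ _

theorem marg_coverage_nonpos [DecidableEq α] {A B : Finset α}
    (h : A.biUnion cov ⊆ B.biUnion cov) :
    marg (coverage cov) A B ≤ 0 := by
  simp [marg, coverage, union_biUnion, union_eq_right.mpr h]

end Coverage

@[simp]
theorem pref_zero [DecidableEq α] (x : ℕ → Finset α) : pref x 0 = ∅ := rfl

theorem pref_succ [DecidableEq α] (x : ℕ → Finset α) (i : ℕ) :
    pref x (i + 1) = x i ∪ pref x i := by
  simp [pref, range_add_one, biUnion_insert]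

theorem pref_eq_of_le [DecidableEq α] {x : ℕ → Finset α} {l : ℕ} (hx : ∀ j ≥ l, x j = ∅)
    {i : ℕ} (hi : l ≤ i) : pref x i = pref x l := by
  induction i, hi using Nat.le_induction with
  | base => rfl
  | succ i hi ih => rw [pref_succ, hx i hi, empty_union, ih]

section OPTval

variable [DecidableEq α] [Fintype α] {f : Finset α → ℝ} {Ss : ℕ → Finset α} {n k : ℕ}

theorem OPTval_le {b : ℝ} (h : ∀ A, f A ≤ b) : OPTval f Ss n k ≤ b :=
  sup'_le _ _ fun _ _ => h _

theorem le_OPTval {y : Fin n → Finset α} (hy : ∀ i, y i ⊆ Ss i ∧ #(y i) ≤ k) :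
    f (univ.biUnion y) ≤ OPTval f Ss n k :=
  le_sup' (fun y : Fin n → Finset α => f (univ.biUnion y)) (by simpa using hy)

end OPTval

namespace HardInstance

variable (n k m : ℕ)

abbrev Col := (Fin k ⊕ Fin m) ⊕ Fin k

abbrev Cell := Fin (n - 1) × Col k m

abbrev Elt := Col k m ⊕ Fin (n - 1) × Fin k

def cells : Elt n k m → Finset (Cell n k m)
  | .inl c => univ ×ˢ {c}
  | .inr (r, j) => insert (r, .inl (.inl j))
      (if h : (j : ℕ) < m then {(r, .inl (.inr ⟨j, h⟩))} else ∅)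

def lowCols : Finset (Col k m) := (univ.disjSum ∅).disjSum ∅

def extraCols : Finset (Col k m) := ((∅ : Finset (Fin k)).disjSum univ).disjSum ∅

def sharedCols : Finset (Col k m) := univ.disjSum ∅

def highCols : Finset (Col k m) := (∅ : Finset (Fin k ⊕ Fin m)).disjSum univ

theorem lowCols_union_extraCols : lowCols k m ∪ extraCols k m = sharedCols k m := by
  ext ((c | c) | c) <;> simp [lowCols, extraCols, sharedCols]

theorem card_lowCols : #(lowCols k m) = k := by simp [lowCols]

theorem card_extraCols : #(extraCols k m) = m := by simp [extraCols]

theorem card_sharedCols : #(sharedCols k m) = k + m := by simp [sharedCols]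

theorem card_highCols : #(highCols k m) = k := by simp [highCols]

theorem extraCols_subset_sharedCols : extraCols k m ⊆ sharedCols k m :=
  lowCols_union_extraCols k m ▸ subset_union_right

variable {n k m} (e : Elt n k m ≃ α)

def objective : Finset α → ℝ := coverage fun a => cells n k m (e.symm a)

def colSet (C : Finset (Col k m)) : Finset α := (C.map .inl).map e.toEmbedding

def actionSet : ℕ → Finset α
  | 0 => colSet e univ
  | i + 1 => ((univ.filter fun p : Fin (n - 1) × Fin k => (p.1 : ℕ) = i).map .inr).map
      e.toEmbedding

def xProfile : ℕ → Finset α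
  | 0 => colSet e (lowCols k m)
  | 1 => colSet e (extraCols k m)
  | _ => ∅

def zProfile : ℕ → Finset α
  | 0 => colSet e (extraCols k m)
  | _ => ∅

theorem biUnion_colSet [DecidableEq α] (C : Finset (Col k m)) :
    (colSet e C).biUnion (fun a => cells n k m (e.symm a)) = univ ×ˢ C := by
  rw [colSet, map_map, map_eq_image, image_biUnion]
  ext ⟨r, c⟩
  simp [cells]

theorem objective_colSet [DecidableEq α] (C : Finset (Col k m)) :
    objective e (colSet e C) = (((n - 1) * #C : ℕ) : ℝ) := by
  rw [objective, coverage, biUnion_colSet, card_product, card_univ, Fintype.card_fin]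

theorem colSet_mono {C C' : Finset (Col k m)} (h : C ⊆ C') : colSet e C ⊆ colSet e C' :=
  map_subset_map.2 (map_subset_map.2 h)

theorem colSet_union [DecidableEq α] (C C' : Finset (Col k m)) :
    colSet e C ∪ colSet e C' = colSet e (C ∪ C') := by
  simp [colSet, map_union]

theorem card_colSet (C : Finset (Col k m)) : #(colSet e C) = #C := by
  simp [colSet]

theorem card_actionSet_succ_le (i : ℕ) : #(actionSet e (i + 1)) ≤ k := by
  rw [actionSet, card_map, card_map]
  refine (card_le_card_of_injOn Prod.snd (fun _ _ => mem_univ _) ?_).trans_eq (card_fin k)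
  intro p hp q hq h
  simp only [coe_filter, Set.mem_ofPred_eq, mem_univ, true_and] at hp hq
  exact Prod.ext (Fin.ext (hp.trans hq.symm)) h

theorem mem_colSet {C : Finset (Col k m)} {a : α} :
    a ∈ colSet e C ↔ ∃ c ∈ C, .inl c = e.symm a := by
  rw [colSet, mem_map_equiv]
  simp only [mem_map, Function.Embedding.inl_apply]

theorem mem_actionSet_succ {i : ℕ} {a : α} :
    a ∈ actionSet e (i + 1) ↔ ∃ p : Fin (n - 1) × Fin k, (p.1 : ℕ) = i ∧ .inr p = e.symm a := by
  rw [actionSet, mem_map_equiv]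
  simp only [mem_map, mem_filter, mem_univ, true_and, Function.Embedding.inr_apply]

theorem objective_le_of_subset_actionSet_zero {A : Finset α} (hA : A ⊆ actionSet e 0) :
    objective e A ≤ #A * (n - 1 : ℕ) :=
  coverage_le_card_mul _ fun a ha => by
    obtain ⟨c, -, hc⟩ := (mem_colSet e).1 (hA ha)
    simp [← hc, cells]

theorem biUnion_cells_subset_shared [DecidableEq α] {i : ℕ} {A : Finset α}
    (hA : A ⊆ actionSet e (i + 1) ∪ colSet e (sharedCols k m)) :
    A.biUnion (fun a => cells n k m (e.symm a)) ⊆ univ ×ˢ sharedCols k m := by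
  refine biUnion_subset.2 fun a ha => ?_
  rcases mem_union.1 (hA ha) with h | h
  · obtain ⟨p, -, hp⟩ := (mem_actionSet_succ e).1 h
    intro q hq
    simp only [← hp, cells, mem_insert] at hq
    split_ifs at hq <;> aesop (add simp sharedCols)
  · rw [← biUnion_colSet e]
    exact subset_biUnion_of_mem (fun a => cells n k m (e.symm a)) h

theorem objective_le_of_subset_shared [DecidableEq α] {i : ℕ} {A : Finset α}
    (hA : A ⊆ actionSet e (i + 1) ∪ colSet e (sharedCols k m)) :
    objective e A ≤ objective e (colSet e (sharedCols k m)) := by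
  rw [objective, coverage, coverage, biUnion_colSet]
  exact_mod_cast card_le_card (biUnion_cells_subset_shared e hA)

theorem biUnion_cells_eq_univ (hmk : m ≤ k) {A : Finset α} (hG : colSet e (highCols k m) ⊆ A)
    (hrow : ∀ i < n - 1, actionSet e (i + 1) ⊆ A) :
    A.biUnion (fun a => cells n k m (e.symm a)) = univ := by
  refine eq_univ_of_forall fun ⟨r, c⟩ => mem_biUnion.2 ?_
  have hrowMem (j : Fin k) : e (.inr (r, j)) ∈ A := hrow r r.2 (by simp [actionSet])
  rcases c with (j | j) | j
  · exact ⟨_, hrowMem j, by simp [cells]⟩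
  · exact ⟨_, hrowMem ⟨j, j.2.trans_le hmk⟩, by simp [cells]⟩
  · exact ⟨e (.inl (.inr j)), hG (by simp [colSet, highCols]), by simp [cells]⟩

theorem xProfile_subset_extra (i : ℕ) : xProfile e (i + 1) ⊆ colSet e (extraCols k m) := by
  rcases i with _ | i
  · exact subset_rfl
  · exact empty_subset _

section Profiles

variable [DecidableEq α]

theorem pref_xProfile_one : pref (xProfile e) 1 = colSet e (lowCols k m) := by
  simp [pref, xProfile]

theorem pref_xProfile_of_two_le {i : ℕ} (hi : 2 ≤ i) :
    pref (xProfile e) i = colSet e (sharedCols k m) := by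
  rw [pref_eq_of_le (fun j hj => ?_) hi, pref_succ, pref_xProfile_one, xProfile, colSet_union,
    union_comm, lowCols_union_extraCols]
  · obtain ⟨j, rfl⟩ := Nat.exists_eq_add_of_le' hj
    rfl

theorem pref_xProfile_subset_shared (i : ℕ) :
    pref (xProfile e) i ⊆ colSet e (sharedCols k m) :=
  calc pref (xProfile e) i ⊆ pref (xProfile e) (i + 2) :=
        biUnion_subset_biUnion_of_subset_left _ (range_subset_range.2 (by omega))
    _ = colSet e (sharedCols k m) := pref_xProfile_of_two_le e (by omega)

theorem pref_zProfile_succ (i : ℕ) : pref (zProfile e) (i + 1) = colSet e (extraCols k m) := by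
  rw [pref_eq_of_le (l := 1) (fun j hj => ?_) (by omega)]
  · simp [pref, zProfile]
  · obtain ⟨j, rfl⟩ := Nat.exists_eq_add_of_le' hj
    rfl

theorem marg_objective_extraCols :
    marg (objective e) (colSet e (extraCols k m)) (colSet e (lowCols k m)) =
      (((n - 1) * m : ℕ) : ℝ) := by
  rw [marg, colSet_union, union_comm, lowCols_union_extraCols, objective_colSet, objective_colSet,
    card_sharedCols, card_lowCols]
  push_cast
  ring

theorem objective_le_objective_lowCols {c : Finset α} (hc : c ⊆ actionSet e 0) (hck : #c ≤ k) :
    objective e c ≤ objective e (colSet e (lowCols k m)) := by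
  have hck' : (#c : ℝ) ≤ k := by exact_mod_cast hck
  rw [objective_colSet, card_lowCols, Nat.cast_mul, mul_comm]
  exact (objective_le_of_subset_actionSet_zero e hc).trans (by gcongr)

theorem marg_le_marg_extraCols {w : Finset α} (hw : w ⊆ actionSet e 0) (hwm : #w ≤ m) :
    marg (objective e) w (colSet e (lowCols k m)) ≤
      marg (objective e) (colSet e (extraCols k m)) (colSet e (lowCols k m)) := by
  have hwm' : (#w : ℝ) ≤ m := by exact_mod_cast hwm
  rw [marg_objective_extraCols, Nat.cast_mul, mul_comm]
  calc marg (objective e) w _ ≤ objective e w := marg_coverage_le _ _ _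
    _ ≤ #w * (n - 1 : ℕ) := objective_le_of_subset_actionSet_zero e hw
    _ ≤ m * (n - 1 : ℕ) := by gcongr

theorem augGreedy_xProfile_zProfile (hmk : m ≤ k) :
    AugGreedy (objective e) (actionSet e) k m n (xProfile e) (zProfile e) := by
  intro i _
  rcases i with _ | i
  · have hcol (C : Finset (Col k m)) : colSet e C ⊆ actionSet e 0 := colSet_mono e (subset_univ C)
    refine ⟨⟨(hcol _).trans subset_union_left, by simp [xProfile, card_colSet, card_lowCols],
      fun c hc hck => ?_⟩, colSet e (extraCols k m), ∅, (union_empty _).symm, hcol _,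
      by simp [card_colSet, card_extraCols, hmk], fun w hw hwk => ?_, empty_subset _, by simp⟩
    · simp only [pref_zero, union_empty] at hc ⊢
      exact objective_le_objective_lowCols e hc hck
    · rw [zero_add, pref_xProfile_one]
      exact marg_le_marg_extraCols e hw (hwk.trans (min_le_right k m))
  · have hpz := pref_zProfile_succ e i
    have hpx : xProfile e (i + 1) ∪ pref (xProfile e) (i + 1) = colSet e (sharedCols k m) := by
      rw [← pref_succ, pref_xProfile_of_two_le e (by omega)]
    refine ⟨⟨(xProfile_subset_extra e i).trans (hpz ▸ subset_union_right),
      (card_le_card (xProfile_subset_extra e i)).trans (by rwa [card_colSet, card_extraCols]),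
      fun c hc _ => ?_⟩, ∅, ∅, by simp [zProfile], empty_subset _, by simp, fun w hw _ => ?_,
      empty_subset _, by simp⟩
    · rw [hpx]
      refine objective_le_of_subset_shared e (i := i) (union_subset (hc.trans ?_) ?_)
      · exact union_subset_union_right (hpz ▸ colSet_mono e (extraCols_subset_sharedCols k m))
      · exact (pref_xProfile_subset_shared e _).trans subset_union_right
    · rw [show marg (objective e) ∅ _ = 0 by simp [marg]]
      refine marg_coverage_nonpos _ ?_
      rw [pref_xProfile_of_two_le e (by omega), biUnion_colSet]
      exact biUnion_cells_subset_shared e (hw.trans subset_union_left)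

theorem objective_pref_xProfile (hn : 2 ≤ n) :
    objective e (pref (xProfile e) n) = (((n - 1) * (k + m) : ℕ) : ℝ) := by
  rw [pref_xProfile_of_two_le e hn, objective_colSet, card_sharedCols]

theorem OPTval_objective [Fintype α] (hn : 1 ≤ n) (hmk : m ≤ k) :
    OPTval (objective e) (actionSet e) n k = (((n - 1) * (k + m + k) : ℕ) : ℝ) := by
  have hcard : #(univ : Finset (Cell n k m)) = (n - 1) * (k + m + k) := by simp
  refine le_antisymm (OPTval_le fun A => ?_) ?_
  · exact hcard ▸ (Nat.cast_le.2 (card_le_univ _))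
  let y : Fin n → Finset α := fun i =>
    if (i : ℕ) = 0 then colSet e (highCols k m) else actionSet e i
  have hy (i : Fin n) : y i ⊆ actionSet e i ∧ #(y i) ≤ k := by
    obtain ⟨_ | i, _⟩ := i
    · exact ⟨colSet_mono e (subset_univ _), by simp [y, card_colSet, card_highCols]⟩
    · exact ⟨subset_rfl, card_actionSet_succ_le e i⟩
  have hcover := biUnion_cells_eq_univ e hmk (subset_biUnion_of_mem y (mem_univ ⟨0, hn⟩))
    fun i hi => subset_biUnion_of_mem y (mem_univ ⟨i + 1, by omega⟩)
  calc _ = objective e (univ.biUnion y) := by rw [objective, coverage, hcover, hcard]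
    _ ≤ _ := le_OPTval hy

end Profiles

end HardInstance

theorem stmt14_general (n k m : ℕ) (hn : 2 ≤ n) (hmk : m * (n - 1) ≤ k) :
    ∃ (N : ℕ) (f : Finset (Fin N) → ℝ) (Ss x z : ℕ → Finset (Fin N)),
      f ∅ = 0 ∧ IsMonotoneFn f ∧ IsSubmodularFn f ∧
      AugGreedy f Ss k m n x z ∧
      f ((Finset.range n).biUnion x) = ((k * (n - 1) + m * (n - 1) : ℕ) : ℝ) ∧
      OPTval f Ss n k = ((2 * k * (n - 1) + m * (n - 1) : ℕ) : ℝ) := by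
  have hm : m ≤ k := (Nat.le_mul_of_pos_right m (by omega)).trans hmk
  let e := Fintype.equivFin (HardInstance.Elt n k m)
  refine ⟨_, HardInstance.objective e, HardInstance.actionSet e, HardInstance.xProfile e,
    HardInstance.zProfile e, coverage_empty _, coverage_monotone _, coverage_submodular _,
    HardInstance.augGreedy_xProfile_zProfile e hm, ?_, ?_⟩
  · rw [← pref, HardInstance.objective_pref_xProfile e hn]
    congr 2
    ring
  · rw [HardInstance.OPTval_objective e (by omega) hm]
    congr 2
    ring

/-- Hard instance for the case m(n−1) ≤ k (Figure 2a in the paper). -/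
theorem stmt14 (n k m : ℕ) (hn : 2 ≤ n) (hk : 1 ≤ k) (hmk : m * (n - 1) ≤ k) :
    ∃ (N : ℕ) (f : Finset (Fin N) → ℝ) (Ss x z : ℕ → Finset (Fin N)),
      f ∅ = 0 ∧ IsMonotoneFn f ∧ IsSubmodularFn f ∧
      AugGreedy f Ss k m n x z ∧
      f ((Finset.range n).biUnion x) = ((k * (n - 1) + m * (n - 1) : ℕ) : ℝ) ∧
      OPTval f Ss n k = ((2 * k * (n - 1) + m * (n - 1) : ℕ) : ℝ) :=
  stmt14_general n k m hn hmk
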